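/- Let m ≥ 2, R = k[x_1,...,x_{m+1}], F = X_1^{a_1}···X_{m+1}^{a_{m+1}}(X_1^{b_1}···X_m^{b_m} − c X_{m+1}^{b_{m+1}}) with b_1, b_2, b_{m+1} ≥ 1 and c ≠ 0. Let w = max{i ≥ 0 : a_{m+1} + 1 ≥ i b_{m+1}} and suppose a_i ≥ w b_i for i = 1,...,m. Then the element q = Σ_{i=0}^{w} c^i (x_1^{b_1}···x_m^{b_m})^i x_{m+1}^{a_{m+1}+1−i b_{m+1}} satisfies x_1^{a_1+1−w b_1} q ∈ Ann_R(F) and x_2^{a_2+1−w b_2} q ∈ Ann_R(F). -/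

import Mathlib

open scoped Classical
open MvPolynomial Finset

/-!
Write `F = x^A (x^B - c x_L^β)` and `x_p^{A_p + 1 - w B_p} q = Σ_{i ≤ w} c^i x^{u_i}`. The `i`-th
summand contracts `F` to `c^i X^{A + B - u_i} - c^{i+1} X^{A + β e_L - u_i}`, and these terms
telescope: `A + B - u_{i+1} = A + β e_L - u_i`. Nothing is left at the ends, because `u_0` has
`x_L`-exponent `A_L + 1 > A_L` and `u_w` has `x_p`-exponent `A_p + 1 > A_p`.
-/

/-- The contraction action of `k[x_1,...,x_N]` on `k[X_1,...,X_N]`. -/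
noncomputable def contract {k : Type*} [CommRing k] {σ : Type*}
    (f F : MvPolynomial σ k) : MvPolynomial σ k :=
  ∑ a ∈ f.support, ∑ b ∈ F.support,
    if a ≤ b then MvPolynomial.monomial (b - a) (MvPolynomial.coeff a f * MvPolynomial.coeff b F)
    else 0

/-- `Ann_R(F) = {f ∈ R : f ∘ F = 0}` as a set. -/
noncomputable def annSet {k : Type*} [CommRing k] {σ : Type*}
    (F : MvPolynomial σ k) : Set (MvPolynomial σ k) :=
  {f | contract f F = 0}

section Contract

variable {k : Type*} [CommRing k] {σ : Type*}

lemma contract_eq_sum (f F : MvPolynomial σ k) :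
    contract f F = (AddMonoidAlgebra.coeff f).sum fun u x => (AddMonoidAlgebra.coeff F).sum
      fun v y => if u ≤ v then monomial (v - u) (x * y) else 0 :=
  rfl

@[simp]
lemma contract_zero_left (F : MvPolynomial σ k) : contract 0 F = 0 := by
  simp [contract]

lemma contract_add_left (f g F : MvPolynomial σ k) :
    contract (f + g) F = contract f F + contract g F := by
  simp only [contract_eq_sum]
  rw [AddMonoidAlgebra.coeff_add, Finsupp.sum_add_index' (by simp)]
  intro u x₁ x₂
  rw [← Finsupp.sum_add]
  congr 1; ext v y
  split_ifs <;> simp [add_mul]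

lemma contract_add_right (f F G : MvPolynomial σ k) :
    contract f (F + G) = contract f F + contract f G := by
  simp only [contract_eq_sum]
  rw [← Finsupp.sum_add]
  congr 1; funext u x
  rw [AddMonoidAlgebra.coeff_add, Finsupp.sum_add_index' (by simp)]
  intro v y₁ y₂
  split_ifs <;> simp [mul_add]

lemma contract_sum_left {ι : Type*} (s : Finset ι) (f : ι → MvPolynomial σ k)
    (F : MvPolynomial σ k) : contract (∑ i ∈ s, f i) F = ∑ i ∈ s, contract (f i) F := by
  induction s using Finset.cons_induction with
  | empty => simp
  | cons i s hi ih => rw [sum_cons, sum_cons, contract_add_left, ih]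

lemma contract_monomial (u v : σ →₀ ℕ) (x y : k) :
    contract (monomial u x) (monomial v y) =
      if u ≤ v then monomial (v - u) (x * y) else 0 := by
  rw [contract_eq_sum]
  by_cases hx : x = 0
  · simp [hx]
  by_cases hy : y = 0
  · simp [hy, Finsupp.sum]
  rw [sum_monomial_eq (by simp), sum_monomial_eq (by simp)]

/-- The `i`-th term meets `monomial V 1` exactly where the `(i-1)`-st meets `monomial W (-c)`,
with opposite coefficients; the two ends meet nothing. -/
lemma contract_sum_monomial_eq_zero_of_telescoping (c : k) (w : ℕ) {u : ℕ → σ →₀ ℕ}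
    {V W : σ →₀ ℕ} (h₀ : ¬ u 0 ≤ V) (hw : ¬ u w ≤ W) (hV : ∀ i < w, u (i + 1) ≤ V)
    (hW : ∀ i < w, u i ≤ W) (hVW : ∀ i < w, V - u (i + 1) = W - u i) :
    contract (∑ i ∈ range (w + 1), monomial (u i) (c ^ i)) (monomial V 1 + monomial W (-c))
      = 0 := by
  simp only [contract_sum_left, contract_add_right, contract_monomial]
  rw [sum_range_succ' _ w, sum_range_succ _ w, if_neg h₀, if_neg hw, add_zero, add_zero,
    ← sum_add_distrib]
  refine sum_eq_zero fun i hi => ?_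
  have hi : i < w := mem_range.mp hi
  rw [if_pos (hV i hi), if_pos (hW i hi), hVW i hi, ← map_add]
  simp [pow_succ]

end Contract

section Exponents

variable {σ : Type*} {A B : σ →₀ ℕ} {p L : σ} {β w : ℕ}

/-- `u_i`, the exponent of the `i`-th summand of `x_p^{A_p + 1 - w B_p} q`. -/
noncomputable def summandExponent (A B : σ →₀ ℕ) (p L : σ) (β w i : ℕ) : σ →₀ ℕ :=
  Finsupp.single p (A p + 1 - w * B p) + i • B + Finsupp.single L (A L + 1 - i * β)

lemma summandExponent_telescopes (hpL : p ≠ L) (hBL : B L = 0) (hBp : 1 ≤ B p) (hβ : 1 ≤ β)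
    (hwL : w * β ≤ A L + 1) (hwA : w • B ≤ A) :
    let u := summandExponent A B p L β w
    ¬ u 0 ≤ A + B ∧ ¬ u w ≤ A + Finsupp.single L β ∧ (∀ i < w, u (i + 1) ≤ A + B) ∧
      (∀ i < w, u i ≤ A + Finsupp.single L β) ∧
      (∀ i < w, A + B - u (i + 1) = A + Finsupp.single L β - u i) := by
  have hLp : L ≠ p := hpL.symm
  have hwAj : ∀ j, w * B j ≤ A j := fun j => by simpa using hwA j
  have hmul : ∀ i < w, ∀ j, i * B j + B j ≤ w * B j := fun i hi j => by
    simpa [add_one_mul] using Nat.mul_le_mul_right (B j) hi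
  have hmulL : ∀ i < w, i * β + β ≤ w * β := fun i hi => by
    simpa [add_one_mul] using Nat.mul_le_mul_right β hi
  refine ⟨fun h => ?_, fun h => ?_, fun i hi j => ?_, fun i hi j => ?_, fun i hi => ?_⟩
  · simpa [summandExponent, hLp, hBL] using h L
  · have := h p; simp [summandExponent, hpL] at this; have := hwAj p; omega
  all_goals
    try ext j
    have := hmul i hi j; have := hwAj j; have := hmulL i hi
    obtain rfl | hjp := eq_or_ne j p
    · simp [summandExponent, hpL, add_one_mul]; omega
    obtain rfl | hjL := eq_or_ne j L
    · simp [summandExponent, hLp, hBL, add_one_mul]; omega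
    · simp [summandExponent, hjp, hjL, add_one_mul]; omega

end Exponents

lemma X_pow_mul_sum_mem_annSet {k : Type*} [CommRing k] {σ : Type*} {A B : σ →₀ ℕ} {p L : σ}
    {β w : ℕ} (c : k) (hpL : p ≠ L) (hBL : B L = 0) (hBp : 1 ≤ B p) (hβ : 1 ≤ β)
    (hwL : w * β ≤ A L + 1) (hwA : w • B ≤ A) :
    X p ^ (A p + 1 - w * B p) * ∑ i ∈ range (w + 1),
        C (c ^ i) * monomial B (1 : k) ^ i * X L ^ (A L + 1 - i * β)
      ∈ annSet (monomial A 1 * (monomial B 1 - C c * X L ^ β)) := by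
  obtain ⟨h₀, hw, hV, hW, hVW⟩ := summandExponent_telescopes hpL hBL hBp hβ hwL hwA
  have hq : X p ^ (A p + 1 - w * B p) * ∑ i ∈ range (w + 1),
        C (c ^ i) * monomial B (1 : k) ^ i * X L ^ (A L + 1 - i * β)
      = ∑ i ∈ range (w + 1), monomial (summandExponent A B p L β w i) (c ^ i) := by
    rw [mul_sum]
    refine sum_congr rfl fun i _ => ?_
    simp only [X_pow_eq_monomial, monomial_pow, C_mul_monomial, monomial_mul, summandExponent]
    congr 1
    · rw [add_assoc]
    · ring
  have hF : monomial A 1 * (monomial B 1 - C c * X L ^ β)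
      = monomial (A + B) 1 + monomial (A + Finsupp.single L β) (-c) := by
    rw [X_pow_eq_monomial, C_mul_monomial, mul_sub, monomial_mul, monomial_mul, sub_eq_add_neg,
      ← map_neg]
    simp
  show contract _ _ = 0
  rw [hq, hF]
  exact contract_sum_monomial_eq_zero_of_telescoping c w h₀ hw hV hW hVW

lemma X_pow_mul_sum_prod_mem_annSet {k : Type*} [CommRing k] {σ : Type*} [Fintype σ]
    {a b : σ → ℕ} {s : Finset σ} {p L : σ} {w : ℕ} (c : k) (hp : p ∈ s) (hL : L ∉ s)
    (hbp : 1 ≤ b p) (hbL : 1 ≤ b L) (hwL : w * b L ≤ a L + 1) (hab : ∀ i ∈ s, w * b i ≤ a i) :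
    X p ^ (a p + 1 - w * b p) * ∑ i ∈ range (w + 1),
        C (c ^ i) * (∏ j ∈ s, (X j : MvPolynomial σ k) ^ b j) ^ i * X L ^ (a L + 1 - i * b L)
      ∈ annSet ((∏ i, X i ^ a i) * ((∏ i ∈ s, X i ^ b i) - C c * X L ^ b L)) := by
  set A := Finsupp.indicator univ fun i _ => a i
  set B := Finsupp.indicator s fun i _ => b i
  have hA : ∀ j, A j = a j := fun j => by simp [A, Finsupp.indicator_apply]
  have hB : ∀ j, B j = if j ∈ s then b j else 0 := fun j => by
    simp [B, Finsupp.indicator_apply]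
  have hwA : w • B ≤ A := fun j => by
    simp only [Finsupp.smul_apply, smul_eq_mul, hA, hB]
    split_ifs with hj
    · exact hab j hj
    · simp
  have hBp : B p = b p := by simp [hB, hp]
  have hpL : p ≠ L := fun h => hL (h ▸ hp)
  have := X_pow_mul_sum_mem_annSet c hpL (by simp [hB, hL]) (hBp ▸ hbp) hbL (by rwa [hA]) hwA
  simp only [hA, hBp] at this
  simpa only [prod_X_pow] using this

/-- Indices `0, 1` play the roles of `1, 2` and `Fin.last m` that of `m + 1`. -/
theorem stmt18 (k : Type*) [Field k] (m : ℕ) (hm : 2 ≤ m)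
    (a b : Fin (m + 1) → ℕ) (c : k)
    (hb1 : 1 ≤ b ⟨0, by omega⟩) (hb2 : 1 ≤ b ⟨1, by omega⟩) (hbm1 : 1 ≤ b (Fin.last m))
    (w : ℕ) (hw1 : w * b (Fin.last m) ≤ a (Fin.last m) + 1)
    (hab : ∀ i : Fin (m + 1), (i : ℕ) < m → w * b i ≤ a i) :
    contract
      ((MvPolynomial.X (⟨0, by omega⟩ : Fin (m + 1)) : MvPolynomial (Fin (m + 1)) k) ^
          (a ⟨0, by omega⟩ + 1 - w * b ⟨0, by omega⟩) *
        ∑ i ∈ Finset.range (w + 1), MvPolynomial.C (c ^ i) *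
          (∏ j ∈ (Finset.univ : Finset (Fin (m + 1))).filter
              fun j : Fin (m + 1) => (j : ℕ) < m,
            (MvPolynomial.X j : MvPolynomial (Fin (m + 1)) k) ^ b j) ^ i *
          MvPolynomial.X (Fin.last m) ^ (a (Fin.last m) + 1 - i * b (Fin.last m)))
      ((∏ i, (MvPolynomial.X i : MvPolynomial (Fin (m + 1)) k) ^ a i) *
        ((∏ i ∈ (Finset.univ : Finset (Fin (m + 1))).filter
            fun i : Fin (m + 1) => (i : ℕ) < m, MvPolynomial.X i ^ b i) -
          MvPolynomial.C c * MvPolynomial.X (Fin.last m) ^ b (Fin.last m))) = 0 ∧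
    contract
      ((MvPolynomial.X (⟨1, by omega⟩ : Fin (m + 1)) : MvPolynomial (Fin (m + 1)) k) ^
          (a ⟨1, by omega⟩ + 1 - w * b ⟨1, by omega⟩) *
        ∑ i ∈ Finset.range (w + 1), MvPolynomial.C (c ^ i) *
          (∏ j ∈ (Finset.univ : Finset (Fin (m + 1))).filter
              fun j : Fin (m + 1) => (j : ℕ) < m,
            (MvPolynomial.X j : MvPolynomial (Fin (m + 1)) k) ^ b j) ^ i *
          MvPolynomial.X (Fin.last m) ^ (a (Fin.last m) + 1 - i * b (Fin.last m)))
      ((∏ i, (MvPolynomial.X i : MvPolynomial (Fin (m + 1)) k) ^ a i) *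
        ((∏ i ∈ (Finset.univ : Finset (Fin (m + 1))).filter
            fun i : Fin (m + 1) => (i : ℕ) < m, MvPolynomial.X i ^ b i) -
          MvPolynomial.C c * MvPolynomial.X (Fin.last m) ^ b (Fin.last m))) = 0 := by
  have hL : Fin.last m ∉ univ.filter fun j : Fin (m + 1) => (j : ℕ) < m := by simp
  exact ⟨X_pow_mul_sum_prod_mem_annSet c (by simp; omega) hL hb1 hbm1 hw1 (by simpa using hab),
    X_pow_mul_sum_prod_mem_annSet c (by simp; omega) hL hb2 hbm1 hw1 (by simpa using hab)⟩
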